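/- Let H₁₁ be a d×d complex matrix, H₂₁ a q×d complex matrix with H₁₂ = H₂₁ᴴ, and H₂₂ a q×q Hermitian complex matrix. Let χ ∈ ℝ be an eigenvalue of H₂₂ with unit eigenvector ψ (H₂₂ψ = χψ), and let φ ∈ ℂ^d be a unit vector such that ⟨ψ, H₂₁·φ⟩ ≠ 0. Define, for real λ with H₂₂ − λ·1 invertible, the Rayleigh quotient R(λ) = Re ⟨φ, (H₁₁ − H₂₁ᴴ·(H₂₂ − λ·1)⁻¹·H₂₁)·φ⟩ of the effective Hamiltonian at φ. Then R(λ) tends to −∞ as λ tends to χ from the left (along the filter 𝓝[<] χ); in particular the smallest eigenvalue of the effective Hamiltonian H_eff(λ) diverges to −∞ as λ → χ⁻. -/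

import Mathlib

open Matrix

/-- The Euclidean (ℓ²) norm of a complex vector. -/
noncomputable def enorm' {n : Type*} [Fintype n] (v : n → ℂ) : ℝ :=
  ‖(EuclideanSpace.equiv n ℂ).symm v‖

/-- The standard Hermitian inner product of two complex vectors. -/
noncomputable def einner {n : Type*} [Fintype n] (v w : n → ℂ) : ℂ :=
  inner ℂ ((EuclideanSpace.equiv n ℂ).symm v) ((EuclideanSpace.equiv n ℂ).symm w)

/-!
Diagonalise `H₂₂ = U D Uᴴ` and put `y = Uᴴ H₂₁ φ`. Away from the spectrum of `H₂₂`,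
`R(λ) = Re ⟨φ, H₁₁ φ⟩ - ∑ᵢ |yᵢ|² / (μᵢ - λ)`. The terms with `μᵢ ≠ χ` stay bounded as
`λ → χ⁻`, while those with `μᵢ = χ` add up to `(∑_{μᵢ = χ} |yᵢ|²) / (χ - λ)`. Since `ψ` lies in
the `χ`-eigenspace, `⟨ψ, H₂₁ φ⟩ = ∑_{μᵢ = χ} conj (Uᴴψ)ᵢ yᵢ`, so the overlap hypothesis makes
that coefficient positive and the sum blows up.
-/

open Filter Topology

theorem einner_eq_star_dotProduct {n : Type*} [Fintype n] (v w : n → ℂ) :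
    einner v w = star v ⬝ᵥ w :=
  dotProduct_comm _ _

theorem eventually_forall_ne_nhdsLT {ι α : Type*} [Finite ι] [Preorder α] [TopologicalSpace α]
    [T1Space α] (μ : ι → α) (χ : α) : ∀ᶠ x in 𝓝[<] χ, ∀ i, μ i ≠ x := by
  refine eventually_all.2 fun i => ?_
  rcases eq_or_ne (μ i) χ with h | h
  · filter_upwards [self_mem_nhdsWithin] with x (hx : x < χ) using h ▸ hx.ne'
  · exact ((eventually_ne_nhds h.symm).mono fun _ => Ne.symm).filter_mono nhdsWithin_le_nhds

theorem tendsto_sub_nhdsLT_nhdsGT_zero (χ : ℝ) :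
    Tendsto (fun x => χ - x) (𝓝[<] χ) (𝓝[>] 0) := by
  refine tendsto_nhdsWithin_of_tendsto_nhds_of_eventually_within _ ?_ ?_
  · have := ((continuous_sub_left χ).tendsto χ).mono_left (nhdsWithin_le_nhds (s := Set.Iio χ))
    rwa [sub_self] at this
  · filter_upwards [self_mem_nhdsWithin] with x (hx : x < χ) using sub_pos.2 hx

theorem tendsto_sum_inv_sub_mul_nhdsLT_atTop {ι : Type*} [Fintype ι] (μ w : ι → ℝ) (χ : ℝ)
    (hw : ∀ i, 0 ≤ w i) (hχ : ∃ i, μ i = χ ∧ 0 < w i) :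
    Tendsto (fun x => ∑ i, (μ i - x)⁻¹ * w i) (𝓝[<] χ) atTop := by
  classical
  set S := Finset.univ.filter fun i => μ i = χ
  have hpos : 0 < ∑ i ∈ S, w i := by
    obtain ⟨i, hμi, hwi⟩ := hχ
    exact Finset.sum_pos' (fun j _ => hw j) ⟨i, by simp [S, hμi], hwi⟩
  have hpole : Tendsto (fun x => ∑ i ∈ S, (μ i - x)⁻¹ * w i) (𝓝[<] χ) atTop := by
    have hS : ∀ x, ∑ i ∈ S, (μ i - x)⁻¹ * w i = (χ - x)⁻¹ * ∑ i ∈ S, w i := fun x => by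
      rw [Finset.mul_sum]
      exact Finset.sum_congr rfl fun i hi => by rw [(Finset.mem_filter.1 hi).2]
    simp_rw [hS]
    exact (tendsto_inv_nhdsGT_zero.comp (tendsto_sub_nhdsLT_nhdsGT_zero χ)).atTop_mul_const hpos
  have hregular : Tendsto (fun x => ∑ i ∈ Sᶜ, (μ i - x)⁻¹ * w i)
      (𝓝[<] χ) (𝓝 (∑ i ∈ Sᶜ, (μ i - χ)⁻¹ * w i)) := by
    refine tendsto_nhdsWithin_of_tendsto_nhds (tendsto_finsetSum _ fun i hi => ?_)
    have : μ i - χ ≠ 0 := sub_ne_zero.2 (by simpa [S] using hi)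
    exact ((continuous_sub_left _).continuousAt.inv₀ this).tendsto.mul_const _
  simpa only [Finset.sum_add_sum_compl] using hpole.atTop_add hregular

theorem Matrix.star_dotProduct_sub_conjTranspose_mul_mul_mulVec {𝕜 m n : Type*} [RCLike 𝕜]
    [Fintype m] [Fintype n] (A : Matrix m m 𝕜) (B : Matrix n m 𝕜) (M : Matrix n n 𝕜)
    (v : m → 𝕜) :
    star v ⬝ᵥ ((A - Bᴴ * M * B) *ᵥ v) = star v ⬝ᵥ (A *ᵥ v) - star (B *ᵥ v) ⬝ᵥ (M *ᵥ B *ᵥ v) := by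
  rw [sub_mulVec, dotProduct_sub, ← mulVec_mulVec, ← mulVec_mulVec, dotProduct_mulVec _ Bᴴ,
    ← star_mulVec]

namespace Matrix.IsHermitian

variable {𝕜 n : Type*} [RCLike 𝕜] [Fintype n] [DecidableEq n] {A : Matrix n n 𝕜}

theorem inv_sub_smul_one_eq_cfc (hA : A.IsHermitian) {x : ℝ}
    (hx : ∀ i, hA.eigenvalues i ≠ x) :
    (A - (x : 𝕜) • 1)⁻¹ = hA.cfc fun t => (t - x)⁻¹ := by
  have hsub : cfc (fun t : ℝ => t - x) A = A - (x : 𝕜) • 1 := by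
    rw [cfc_sub .., cfc_id' .., cfc_const .., Algebra.algebraMap_eq_smul_one,
      ← RCLike.real_smul_eq_coe_smul]
  rw [← hA.cfc_eq, cfc_inv (fun t : ℝ => t - x) A, hsub, nonsing_inv_eq_ringInverse]
  rw [hA.spectrum_real_eq_range_eigenvalues]
  rintro _ ⟨i, rfl⟩
  exact sub_ne_zero.2 (hx i)

theorem star_dotProduct_cfc_mulVec (hA : A.IsHermitian) (f : ℝ → ℝ) (v : n → 𝕜) :
    star v ⬝ᵥ (hA.cfc f *ᵥ v) =
      ∑ i, (f (hA.eigenvalues i) *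
        ‖(star (hA.eigenvectorUnitary : Matrix n n 𝕜) *ᵥ v) i‖ ^ 2 : ℝ) := by
  have hstar : star v ᵥ* (hA.eigenvectorUnitary : Matrix n n 𝕜) =
      star (star (hA.eigenvectorUnitary : Matrix n n 𝕜) *ᵥ v) := by
    rw [star_mulVec, star_eq_conjTranspose, conjTranspose_conjTranspose]
  rw [IsHermitian.cfc, Unitary.conjStarAlgAut_apply, ← mulVec_mulVec, ← mulVec_mulVec,
    dotProduct_mulVec, hstar]
  simp only [dotProduct, mulVec_diagonal, Pi.star_apply, RCLike.star_def, Function.comp_apply,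
    RCLike.ofReal_sum, RCLike.ofReal_mul, RCLike.ofReal_pow, ← RCLike.conj_mul]
  exact Finset.sum_congr rfl fun i _ => by ring

theorem exists_eigenvalues_eq_of_star_dotProduct_ne_zero (hA : A.IsHermitian)
    {χ : ℝ} {ψ v : n → 𝕜} (hψ : A *ᵥ ψ = (χ : 𝕜) • ψ) (hv : star ψ ⬝ᵥ v ≠ 0) :
    ∃ i, hA.eigenvalues i = χ ∧ (star (hA.eigenvectorUnitary : Matrix n n 𝕜) *ᵥ v) i ≠ 0 := by
  set U : Matrix n n 𝕜 := (hA.eigenvectorUnitary : Matrix n n 𝕜)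
  have hU : U * star U = 1 := mem_unitaryGroup_iff.mp hA.eigenvectorUnitary.2
  have hintertwine : star U * A = diagonal (RCLike.ofReal ∘ hA.eigenvalues) * star U := by
    rw [← hA.conjStarAlgAut_star_eigenvectorUnitary, Unitary.conjStarAlgAut_star_apply,
      mul_assoc _ U, hU, mul_one]
  have hcoord : ∀ i, (hA.eigenvalues i : 𝕜) * (star U *ᵥ ψ) i = χ * (star U *ᵥ ψ) i := fun i => by
    have := congrFun (congrArg (· *ᵥ ψ) hintertwine) i
    simp only [← mulVec_mulVec, hψ, mulVec_smul, mulVec_diagonal, Pi.smul_apply,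
      smul_eq_mul, Function.comp_apply] at this
    exact this.symm
  have hdot : star ψ ⬝ᵥ v = star (star U *ᵥ ψ) ⬝ᵥ (star U *ᵥ v) := by
    rw [star_mulVec, star_eq_conjTranspose, conjTranspose_conjTranspose, ← dotProduct_mulVec,
      mulVec_mulVec, ← star_eq_conjTranspose, hU, one_mulVec]
  obtain ⟨i, -, hi⟩ := Finset.exists_ne_zero_of_sum_ne_zero (hdot ▸ hv)
  have hψi : (star U *ᵥ ψ) i ≠ 0 := fun h => hi (by simp [h])
  refine ⟨i, ?_, right_ne_zero_of_mul hi⟩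
  exact_mod_cast mul_right_cancel₀ hψi (hcoord i)

end Matrix.IsHermitian

theorem rayleigh_quotient_tendsto_atBot_general
    (d q : ℕ)
    (H₁₁ : Matrix (Fin d) (Fin d) ℂ)
    (H₂₁ : Matrix (Fin q) (Fin d) ℂ)
    (H₂₂ : Matrix (Fin q) (Fin q) ℂ) (hH₂₂ : H₂₂.IsHermitian)
    (χ : ℝ) (ψ : Fin q → ℂ)
    (hψ : H₂₂ *ᵥ ψ = (χ : ℂ) • ψ)
    (φ : Fin d → ℂ)
    (hoverlap : einner ψ (H₂₁ *ᵥ φ) ≠ 0) :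
    Filter.Tendsto
      (fun lam : ℝ =>
        (einner φ ((H₁₁ - H₂₁ᴴ * (H₂₂ - (lam : ℂ) • 1)⁻¹ * H₂₁) *ᵥ φ)).re)
      (nhdsWithin χ (Set.Iio χ)) Filter.atBot := by
  set y := star (hH₂₂.eigenvectorUnitary : Matrix (Fin q) (Fin q) ℂ) *ᵥ H₂₁ *ᵥ φ
  obtain ⟨i, hiχ, hyi⟩ := hH₂₂.exists_eigenvalues_eq_of_star_dotProduct_ne_zero hψ
    (by rwa [einner_eq_star_dotProduct] at hoverlap)
  have hpole := tendsto_sum_inv_sub_mul_nhdsLT_atTop hH₂₂.eigenvalues (fun j => ‖y j‖ ^ 2) χ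
    (fun j => by positivity) ⟨i, hiχ, pow_pos (norm_pos_iff.2 hyi) 2⟩
  have hformula : ∀ᶠ lam in 𝓝[<] χ,
      (einner φ (H₁₁ *ᵥ φ)).re - ∑ j, (hH₂₂.eigenvalues j - lam)⁻¹ * ‖y j‖ ^ 2 =
        (einner φ ((H₁₁ - H₂₁ᴴ * (H₂₂ - (lam : ℂ) • 1)⁻¹ * H₂₁) *ᵥ φ)).re := by
    filter_upwards [eventually_forall_ne_nhdsLT hH₂₂.eigenvalues χ] with lam hlam
    -- `RCLike.ofReal` and `Complex.ofReal` agree only up to defeq, so `rw` needs this restatement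
    have hresolvent : (H₂₂ - (lam : ℂ) • 1)⁻¹ = hH₂₂.cfc fun t => (t - lam)⁻¹ :=
      hH₂₂.inv_sub_smul_one_eq_cfc hlam
    rw [einner_eq_star_dotProduct, einner_eq_star_dotProduct,
      star_dotProduct_sub_conjTranspose_mul_mul_mulVec, hresolvent,
      hH₂₂.star_dotProduct_cfc_mulVec, Complex.sub_re]
    rfl
  exact (tendsto_atBot_add_const_left _ _ (tendsto_neg_atTop_atBot.comp hpole)).congr' hformula

/-- **Divergence of the effective-Hamiltonian Rayleigh quotient at a pole.**
Let `H₂₂` be Hermitian with eigenvalue `χ` and unit eigenvector `ψ`, and let `φ` be a unit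
vector with `⟨ψ, H₂₁ φ⟩ ≠ 0`. Then the Rayleigh quotient
`R(λ) = Re ⟨φ, (H₁₁ - H₂₁ᴴ (H₂₂ - λ•1)⁻¹ H₂₁) φ⟩` of the effective Hamiltonian tends to `-∞`
as `λ → χ⁻` (along `𝓝[<] χ`); in particular the smallest eigenvalue of `H_eff(λ)` diverges
to `-∞` as `λ → χ⁻`. -/
theorem rayleigh_quotient_tendsto_atBot
    (d q : ℕ)
    (H₁₁ : Matrix (Fin d) (Fin d) ℂ)
    (H₂₁ : Matrix (Fin q) (Fin d) ℂ)
    (H₂₂ : Matrix (Fin q) (Fin q) ℂ) (hH₂₂ : H₂₂.IsHermitian)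
    (χ : ℝ) (ψ : Fin q → ℂ) (hψnorm : enorm' ψ = 1)
    (hψ : H₂₂ *ᵥ ψ = (χ : ℂ) • ψ)
    (φ : Fin d → ℂ) (hφ : enorm' φ = 1)
    (hoverlap : einner ψ (H₂₁ *ᵥ φ) ≠ 0) :
    Filter.Tendsto
      (fun lam : ℝ =>
        (einner φ ((H₁₁ - H₂₁ᴴ * (H₂₂ - (lam : ℂ) • 1)⁻¹ * H₂₁) *ᵥ φ)).re)
      (nhdsWithin χ (Set.Iio χ)) Filter.atBot :=
  rayleigh_quotient_tendsto_atBot_general d q H₁₁ H₂₁ H₂₂ hH₂₂ χ ψ hψ φ hoverlap
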